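/- Let f : M → ℝᵐ be an isometric immersion, 𝒯 a conformal infinitesimal bending with associated tensors L, 𝒴 (defined by ⟨𝒴η,X⟩ + ⟨η,LX⟩ = 0), A the shape operator, and define ℰ(X,η) = α(X,𝒴η) + (LA_ηX)_{N_fM}. Then ℰ satisfies the compatibility condition ⟨ℰ(X,η),ξ⟩ + ⟨ℰ(X,ξ),η⟩ = 0 for all tangent fields X and normal fields η, ξ. -/

import Mathlib

open scoped InnerProductSpace

noncomputable section

variable {n m : ℕ}

/-- Tangential projection: orthogonal projection onto the image of `dfₓ`. -/
def tangPart (f : EuclideanSpace ℝ (Fin n) → EuclideanSpace ℝ (Fin m))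
    (x : EuclideanSpace ℝ (Fin n)) (v : EuclideanSpace ℝ (Fin m)) :
    EuclideanSpace ℝ (Fin m) :=
  (Submodule.orthogonalProjectionOnto (LinearMap.range (fderiv ℝ f x : EuclideanSpace ℝ (Fin n) →ₗ[ℝ] EuclideanSpace ℝ (Fin m))) v : EuclideanSpace ℝ (Fin m))

/-- Normal component. -/
def norPart (f : EuclideanSpace ℝ (Fin n) → EuclideanSpace ℝ (Fin m))
    (x : EuclideanSpace ℝ (Fin n)) (v : EuclideanSpace ℝ (Fin m)) :
    EuclideanSpace ℝ (Fin m) :=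
  v - tangPart f x v

/-- Pushforward of a vector field `X` on the chart domain: `f_* X`. -/
def pushf (f : EuclideanSpace ℝ (Fin n) → EuclideanSpace ℝ (Fin m))
    (X : EuclideanSpace ℝ (Fin n) → EuclideanSpace ℝ (Fin n))
    (x : EuclideanSpace ℝ (Fin n)) : EuclideanSpace ℝ (Fin m) :=
  fderiv ℝ f x (X x)

/-- Second fundamental form on vector fields: normal component of `D_X (f_* Y)`. -/
def sff (f : EuclideanSpace ℝ (Fin n) → EuclideanSpace ℝ (Fin m))
    (X Y : EuclideanSpace ℝ (Fin n) → EuclideanSpace ℝ (Fin n))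
    (x : EuclideanSpace ℝ (Fin n)) : EuclideanSpace ℝ (Fin m) :=
  norPart f x (fderiv ℝ (pushf f Y) x (X x))

/-- Induced Levi-Civita connection: `f_* (∇_X Y)` is the tangential part of
`D_X (f_* Y)`; we recover `∇_X Y` using the injectivity of `dfₓ`. -/
def covDer (f : EuclideanSpace ℝ (Fin n) → EuclideanSpace ℝ (Fin m))
    (X Y : EuclideanSpace ℝ (Fin n) → EuclideanSpace ℝ (Fin n))
    (x : EuclideanSpace ℝ (Fin n)) : EuclideanSpace ℝ (Fin n) :=
  Function.invFun (fderiv ℝ f x) (tangPart f x (fderiv ℝ (pushf f Y) x (X x)))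

/-- The tensor `L` of an infinitesimal bending: `L u = ∇̃_u 𝒯 - ρ f_* u` (pointwise). -/
def Lmap (f 𝒯 : EuclideanSpace ℝ (Fin n) → EuclideanSpace ℝ (Fin m))
    (ρ : EuclideanSpace ℝ (Fin n) → ℝ)
    (x : EuclideanSpace ℝ (Fin n)) (u : EuclideanSpace ℝ (Fin n)) :
    EuclideanSpace ℝ (Fin m) :=
  fderiv ℝ 𝒯 x u - ρ x • fderiv ℝ f x u

/-- `B(X,Y) = (∇̃_X L) Y = ∇̃_X (L Y) - L (∇_X Y)`. -/
def Bmap (f 𝒯 : EuclideanSpace ℝ (Fin n) → EuclideanSpace ℝ (Fin m))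
    (ρ : EuclideanSpace ℝ (Fin n) → ℝ)
    (X Y : EuclideanSpace ℝ (Fin n) → EuclideanSpace ℝ (Fin n))
    (x : EuclideanSpace ℝ (Fin n)) : EuclideanSpace ℝ (Fin m) :=
  fderiv ℝ (fun y => Lmap f 𝒯 ρ y (Y y)) x (X x) - Lmap f 𝒯 ρ x (covDer f X Y x)

/-- Conformal infinitesimal bending condition (in a chart). -/
def IsCIB (f 𝒯 : EuclideanSpace ℝ (Fin n) → EuclideanSpace ℝ (Fin m))
    (ρ : EuclideanSpace ℝ (Fin n) → ℝ) : Prop :=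
  ∀ (x : EuclideanSpace ℝ (Fin n)) (u v : EuclideanSpace ℝ (Fin n)),
    ⟪fderiv ℝ 𝒯 x u, fderiv ℝ f x v⟫_ℝ + ⟪fderiv ℝ f x u, fderiv ℝ 𝒯 x v⟫_ℝ
      = 2 * ρ x * ⟪fderiv ℝ f x u, fderiv ℝ f x v⟫_ℝ


/-- Pointwise second fundamental form on vectors (using constant extensions). -/
def sffv (f : EuclideanSpace ℝ (Fin n) → EuclideanSpace ℝ (Fin m))
    (x : EuclideanSpace ℝ (Fin n)) (u v : EuclideanSpace ℝ (Fin n)) :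
    EuclideanSpace ℝ (Fin m) :=
  norPart f x (fderiv ℝ (fun y => fderiv ℝ f y v) x u)

/-- The tensor `ℰ(X,η) = α(X, 𝒴η) + (L A_η X)_{N_f M}` associated to a conformal
infinitesimal bending satisfies `⟨ℰ(X,η),ξ⟩ + ⟨ℰ(X,ξ),η⟩ = 0` for normal `η, ξ`. -/
theorem stmt_16 (f 𝒯 : EuclideanSpace ℝ (Fin n) → EuclideanSpace ℝ (Fin m))
    (ρ : EuclideanSpace ℝ (Fin n) → ℝ)
    (hf : ContDiff ℝ (⊤ : ℕ∞) f) (h𝒯 : ContDiff ℝ (⊤ : ℕ∞) 𝒯) (hρ : ContDiff ℝ (⊤ : ℕ∞) ρ)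
    (himm : ∀ x, Function.Injective (fderiv ℝ f x))
    (hbend : IsCIB f 𝒯 ρ)
    -- `𝒴 : N_f M → TM` defined by `⟨𝒴η, X⟩ + ⟨η, LX⟩ = 0` (metric induced by `f`)
    (𝒴 : EuclideanSpace ℝ (Fin n) → EuclideanSpace ℝ (Fin m) → EuclideanSpace ℝ (Fin n))
    (h𝒴 : ∀ x (η : EuclideanSpace ℝ (Fin m)) (u : EuclideanSpace ℝ (Fin n)),
      ⟪fderiv ℝ f x (𝒴 x η), fderiv ℝ f x u⟫_ℝ + ⟪η, Lmap f 𝒯 ρ x u⟫_ℝ = 0)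
    -- shape operator `A_η` defined by `⟨A_η u, v⟩ = ⟨α(u,v), η⟩`
    (A : EuclideanSpace ℝ (Fin n) → EuclideanSpace ℝ (Fin m) →
      EuclideanSpace ℝ (Fin n) → EuclideanSpace ℝ (Fin n))
    (hA : ∀ x (η : EuclideanSpace ℝ (Fin m)) (u v : EuclideanSpace ℝ (Fin n)),
      ⟪fderiv ℝ f x (A x η u), fderiv ℝ f x v⟫_ℝ = ⟪sffv f x u v, η⟫_ℝ) :
    ∀ (x : EuclideanSpace ℝ (Fin n)) (u : EuclideanSpace ℝ (Fin n))
      (η ξ : EuclideanSpace ℝ (Fin m)),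
      η ∈ (LinearMap.range (fderiv ℝ f x : EuclideanSpace ℝ (Fin n) →ₗ[ℝ] EuclideanSpace ℝ (Fin m)))ᗮ →
        ξ ∈ (LinearMap.range (fderiv ℝ f x : EuclideanSpace ℝ (Fin n) →ₗ[ℝ] EuclideanSpace ℝ (Fin m)))ᗮ →
      ⟪sffv f x u (𝒴 x η) + norPart f x (Lmap f 𝒯 ρ x (A x η u)), ξ⟫_ℝ
        + ⟪sffv f x u (𝒴 x ξ) + norPart f x (Lmap f 𝒯 ρ x (A x ξ u)), η⟫_ℝ = 0 := by
  intro x u η ξ hη hξ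
  have hnor : ∀ (w ζ : EuclideanSpace ℝ (Fin m)),
      ζ ∈ (LinearMap.range (fderiv ℝ f x : EuclideanSpace ℝ (Fin n) →ₗ[ℝ] EuclideanSpace ℝ (Fin m)))ᗮ → ⟪norPart f x w, ζ⟫_ℝ = ⟪w, ζ⟫_ℝ := by
    intro w ζ hζ
    have ht : ⟪tangPart f x w, ζ⟫_ℝ = 0 :=
      hζ _ (SetLike.coe_mem (Submodule.orthogonalProjectionOnto (LinearMap.range (fderiv ℝ f x : EuclideanSpace ℝ (Fin n) →ₗ[ℝ] EuclideanSpace ℝ (Fin m))) w))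
    simp [norPart, inner_sub_left, ht]
  have key : ∀ (η ξ : EuclideanSpace ℝ (Fin m)),
      ⟪sffv f x u (𝒴 x η), ξ⟫_ℝ = - ⟪Lmap f 𝒯 ρ x (A x ξ u), η⟫_ℝ := by
    intro η ξ
    have h1 := hA x ξ u (𝒴 x η)
    have h2 := h𝒴 x η (A x ξ u)
    have h3 : ⟪fderiv ℝ f x (A x ξ u), fderiv ℝ f x (𝒴 x η)⟫_ℝ
        = ⟪fderiv ℝ f x (𝒴 x η), fderiv ℝ f x (A x ξ u)⟫_ℝ := real_inner_comm _ _
    have h4 : ⟪η, Lmap f 𝒯 ρ x (A x ξ u)⟫_ℝ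
        = ⟪Lmap f 𝒯 ρ x (A x ξ u), η⟫_ℝ := real_inner_comm _ _
    linarith
  rw [inner_add_left, inner_add_left, hnor _ _ hξ, hnor _ _ hη, key η ξ, key ξ η]
  ring

end
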